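/- arXiv:1109.3948 — 2 statements merged into one kernel-verified Lean document; each statement's English description precedes it below -/
import Mathlib

section
/- Corollary: T_P is the direct sum of the kernel of Q and the span of 𝟙. Precisely: (a) for every x : Fin n → ℝ, x ∈ T_P if and only if there exist y : Fin n → ℝ with Q.mulVec y = 0 and a : ℝ such that x = y + a • 𝟙; (b) the sum is direct: Q.mulVec 𝟙 ≠ 0, i.e., 𝟙 does not belong to the kernel of Q.mulVec. -/
/-!
Rows summing to `1` says exactly that `P *ᵥ 𝟙 = 𝟙`. Fixed vectors of `P` are fixed by every power,
and fixing a vector is a closed condition on matrices, so `Q *ᵥ 𝟙 = 𝟙` as well. Hence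
`Q *ᵥ x = a • 𝟙 = Q *ᵥ (a • 𝟙)` is the same as `x - a • 𝟙 ∈ ker Q`, and `𝟙 ∉ ker Q` since `𝟙 ≠ 0`.
-/

open Filter Matrix

namespace Matrix

variable {ι R : Type*} [Fintype ι]

theorem mulVec_one_eq_one_of_sum_row_eq_one [NonAssocSemiring R] {A : Matrix ι ι R}
    (hA : ∀ i, ∑ j, A i j = 1) : A *ᵥ 1 = 1 := by
  ext i
  simpa [mulVec, dotProduct] using hA i

theorem pow_mulVec_eq_self [DecidableEq ι] [Semiring R] {A : Matrix ι ι R} {v : ι → R}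
    (hv : A *ᵥ v = v) (k : ℕ) : A ^ k *ᵥ v = v := by
  induction k with
  | zero => exact one_mulVec v
  | succ k ih => rw [pow_succ, ← mulVec_mulVec, hv, ih]

theorem mulVec_eq_self_of_tendsto_pow [DecidableEq ι] [Semiring R] [TopologicalSpace R]
    [IsTopologicalSemiring R] [T2Space R] {A Q : Matrix ι ι R} {v : ι → R}
    (hv : A *ᵥ v = v) (hQ : Tendsto (fun k => A ^ k) atTop (nhds Q)) : Q *ᵥ v = v := by
  have hclosed : IsClosed {M : Matrix ι ι R | M *ᵥ v = v} :=
    isClosed_eq (continuous_id.matrix_mulVec continuous_const) continuous_const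
  exact hclosed.mem_of_tendsto hQ (Eventually.of_forall (pow_mulVec_eq_self hv))

theorem exists_mulVec_eq_smul_iff [CommRing R] {Q : Matrix ι ι R} {e : ι → R}
    (he : Q *ᵥ e = e) (x : ι → R) :
    (∃ a : R, Q *ᵥ x = a • e) ↔ ∃ y, Q *ᵥ y = 0 ∧ ∃ a : R, x = y + a • e := by
  constructor
  · rintro ⟨a, ha⟩
    refine ⟨x - a • e, ?_, a, (sub_add_cancel x _).symm⟩
    rw [mulVec_sub, mulVec_smul, he, ha, sub_self]
  · rintro ⟨y, hy, a, rfl⟩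
    exact ⟨a, by rw [mulVec_add, mulVec_smul, hy, he, zero_add]⟩

end Matrix

theorem region_of_convergence_eq_ker_Q_oplus_span_one_general
    (n : ℕ) (hn : 0 < n) (P Q : Matrix (Fin n) (Fin n) ℝ)
    (hProw : ∀ i, ∑ j, P i j = 1)
    (hconv : Tendsto (fun k => P ^ k) atTop (nhds Q)) :
    (∀ x : Fin n → ℝ,
      (∃ a : ℝ, ∀ i, Q.mulVec x i = a) ↔
        ∃ y : Fin n → ℝ, Q.mulVec y = 0 ∧
          ∃ a : ℝ, x = y + a • (fun _ => (1 : ℝ))) ∧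
    Q.mulVec (fun _ => (1 : ℝ)) ≠ 0 := by
  have hQ : Q *ᵥ 1 = 1 :=
    mulVec_eq_self_of_tendsto_pow (mulVec_one_eq_one_of_sum_row_eq_one hProw) hconv
  refine ⟨fun x => ?_, ?_⟩
  · have hconst : ∀ a : ℝ, (∀ i, (Q *ᵥ x) i = a) ↔ Q *ᵥ x = a • 1 := fun a => by
      simp only [funext_iff, Pi.smul_apply, Pi.one_apply, smul_eq_mul, mul_one]
    simp only [hconst]
    exact exists_mulVec_eq_smul_iff hQ x
  · have : Nonempty (Fin n) := ⟨⟨0, hn⟩⟩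
    exact hQ.trans_ne one_ne_zero

/-- Corollary: `T_P = N(Q) ⊕ span 𝟙`, where `Q = lim P^k`. -/
theorem region_of_convergence_eq_ker_Q_oplus_span_one
    (n : ℕ) (hn : 0 < n) (P Q : Matrix (Fin n) (Fin n) ℝ)
    (hPnonneg : ∀ i j, 0 ≤ P i j) (hProw : ∀ i, ∑ j, P i j = 1)
    (hconv : Tendsto (fun k => P ^ k) atTop (nhds Q)) :
    (∀ x : Fin n → ℝ,
      (∃ a : ℝ, ∀ i, Q.mulVec x i = a) ↔
        ∃ y : Fin n → ℝ, Q.mulVec y = 0 ∧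
          ∃ a : ℝ, x = y + a • (fun _ => (1 : ℝ))) ∧
    Q.mulVec (fun _ => (1 : ℝ)) ≠ 0 :=
  region_of_convergence_eq_ker_Q_oplus_span_one_general n hn P Q hProw hconv
end

section
/- Proposition 7, item 1: The weight vector α of the orthogonal projection procedure is a stationary vector of P: Matrix.vecMul α P = α (i.e., αᵀ P = αᵀ). -/
open Filter Matrix

/-!
Since `Q = lim Pᵏ`, we have `Q P = Q` and `Q² = Q`. Every vector of `ker Q` lies in `T_P`, the
range of the projection `S`, so `S` fixes `ker Q`, which contains the columns of `1 - Q`. Hence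
`Q S (1 - Q) = Q (1 - Q) = 0`, i.e. `Q S Q = Q S`, and then `Q S P = Q S Q P = Q S Q = Q S`. Reading
this identity on a row of `Q S`, all of which equal `αᵀ`, gives `αᵀ P = αᵀ`.
-/

section PowerLimit

variable {M : Type*} [Monoid M] [TopologicalSpace M] [ContinuousMul M] [T2Space M] {a q : M}

theorem mul_eq_left_of_tendsto_pow (h : Tendsto (fun k => a ^ k) atTop (nhds q)) :
    q * a = q := by
  have hshift : Tendsto (fun k => a ^ k * a) atTop (nhds q) := by
    simpa only [Function.comp_def, pow_succ] using h.comp (tendsto_add_atTop_nat 1)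
  exact tendsto_nhds_unique (h.mul_const a) hshift

theorem isIdempotentElem_of_tendsto_pow (h : Tendsto (fun k => a ^ k) atTop (nhds q)) :
    IsIdempotentElem q := by
  have hfix : ∀ k : ℕ, q * a ^ k = q := by
    intro k
    induction k with
    | zero => rw [pow_zero, mul_one]
    | succ k ih => rw [pow_succ, ← mul_assoc, ih, mul_eq_left_of_tendsto_pow h]
  have hlim : Tendsto (fun k => q * a ^ k) atTop (nhds q) := by
    simp only [hfix, tendsto_const_nhds]
  exact tendsto_nhds_unique (h.const_mul q) hlim

end PowerLimit

namespace Matrix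

variable {m R : Type*} [Fintype m]

theorem mulVec_eq_self_of_mem_range [Semiring R] {S : Matrix m m R} (hS : IsIdempotentElem S)
    {x : m → R} (hx : x ∈ Set.range S.mulVec) : S *ᵥ x = x := by
  obtain ⟨y, rfl⟩ := hx
  rw [mulVec_mulVec, hS.eq]

theorem mul_one_sub_eq_of_fixes_ker [DecidableEq m] [Ring R] {Q S : Matrix m m R}
    (hQ : IsIdempotentElem Q) (hS : ∀ x, Q *ᵥ x = 0 → S *ᵥ x = x) :
    S * (1 - Q) = 1 - Q := by
  refine ext_iff_mulVec.mpr fun x => ?_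
  rw [← mulVec_mulVec]
  refine hS _ ?_
  rw [mulVec_mulVec, hQ.mul_one_sub_self, zero_mulVec]

theorem vecMul_eq_self_of_forall_row_eq [Semiring R] {A M : Matrix m m R} {v : m → R}
    (hA : ∀ i j, A i j = v j) (hAM : A * M = A) : v ᵥ* M = v := by
  funext j
  have hrow := congrFun (congrFun hAM j) j
  simpa only [mul_apply, hA, vecMul, dotProduct] using hrow

end Matrix

theorem weight_vector_is_stationary_general
    (n : ℕ) (P Q : Matrix (Fin n) (Fin n) ℝ)
    (hconv : Tendsto (fun k => P ^ k) atTop (nhds Q))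
    (S : Matrix (Fin n) (Fin n) ℝ)
    (hSidem : S * S = S)
    (hScol : {v | ∃ x : Fin n → ℝ, S.mulVec x = v} =
      {x | ∃ a : ℝ, ∀ i, Q.mulVec x i = a})
    (α : Fin n → ℝ) (hα : ∀ i j, (Q * S) i j = α j) :
    Matrix.vecMul α P = α := by
  have hQP : Q * P = Q := mul_eq_left_of_tendsto_pow hconv
  have hQ : IsIdempotentElem Q := isIdempotentElem_of_tendsto_pow hconv
  have hSker : ∀ x, Q *ᵥ x = 0 → S *ᵥ x = x := by
    intro x hx
    have hxT : x ∈ {v | ∃ y : Fin n → ℝ, S *ᵥ y = v} :=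
      hScol ▸ ⟨0, fun i => by rw [hx]; rfl⟩
    exact mulVec_eq_self_of_mem_range hSidem hxT
  have hQSQ : Q * S * Q = Q * S := by
    have h : Q * S * (1 - Q) = 0 := by
      rw [mul_assoc, mul_one_sub_eq_of_fixes_ker hQ hSker, hQ.mul_one_sub_self]
    rwa [mul_sub, mul_one, sub_eq_zero, eq_comm] at h
  have hQSP : Q * S * P = Q * S := by rw [← hQSQ, mul_assoc, hQP]
  exact vecMul_eq_self_of_forall_row_eq hα hQSP

/-- Proposition 7, item 1: the weight vector `α` of the orthogonal projection
procedure is a stationary vector of `P`: `αᵀ P = αᵀ`. -/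
theorem weight_vector_is_stationary
    (n : ℕ) (hn : 0 < n) (P Q : Matrix (Fin n) (Fin n) ℝ)
    (hPnonneg : ∀ i j, 0 ≤ P i j) (hProw : ∀ i, ∑ j, P i j = 1)
    (hconv : Tendsto (fun k => P ^ k) atTop (nhds Q))
    (S : Matrix (Fin n) (Fin n) ℝ)
    (hSsym : Sᵀ = S) (hSidem : S * S = S)
    (hScol : {v | ∃ x : Fin n → ℝ, S.mulVec x = v} =
      {x | ∃ a : ℝ, ∀ i, Q.mulVec x i = a})
    (α : Fin n → ℝ) (hα : ∀ i j, (Q * S) i j = α j) :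
    Matrix.vecMul α P = α :=
  weight_vector_is_stationary_general n P Q hconv S hSidem hScol α hα
end
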